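/- In the bipartite case with two particles each of dimension n ≥ 1: if k·(4n − 3) < n⁴, then the set Σ_pure^k(n,n) of states on ℂⁿ⊗ℂⁿ with pure-state ensemble length at most k has (n⁴−1)-dimensional Hausdorff measure zero. In particular, one must almost always use more than n³/(4 − 3/n) pure product states to construct a mixed separable bipartite state. -/

import Mathlib

open scoped ComplexOrder
open MeasureTheory

/-- A density matrix: positive semidefinite (hence Hermitian) with trace 1. -/
def IsDensityMatrix {m : Type*} [Fintype m] [DecidableEq m] (A : Matrix m m ℂ) : Prop :=
  A.PosSemidef ∧ A.trace = 1

/-- A pure density matrix: a density matrix of rank one. -/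
def IsPureDensityMatrix {m : Type*} [Fintype m] [DecidableEq m] (A : Matrix m m ℂ) : Prop :=
  IsDensityMatrix A ∧ A.rank = 1

/-- Tensor (Kronecker) product of the matrices `B i` over all `p` particles. -/
def prodMat {p : ℕ} (n : Fin p → ℕ) (B : ∀ i, Matrix (Fin (n i)) (Fin (n i)) ℂ) :
    Matrix (∀ i, Fin (n i)) (∀ i, Fin (n i)) ℂ :=
  fun x y => ∏ i, B i (x i) (y i)

/-- `Σ^k(n₁,…,n_p)`: separable states of ensemble length at most `k`. -/
def SigmaK {p : ℕ} (n : Fin p → ℕ) (k : ℕ) :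
    Set (Matrix (∀ i, Fin (n i)) (∀ i, Fin (n i)) ℂ) :=
  {A | ∃ (l : Fin k → ℝ) (B : Fin k → ∀ i, Matrix (Fin (n i)) (Fin (n i)) ℂ),
    (∀ j, 0 ≤ l j) ∧ (∑ j, l j) = 1 ∧ (∀ j i, IsDensityMatrix (B j i)) ∧
    A = ∑ j, l j • prodMat n (B j)}

/-- `Σ_pure^k(n₁,…,n_p)`: separable states of pure-state ensemble length at most `k`. -/
def SigmaPureK {p : ℕ} (n : Fin p → ℕ) (k : ℕ) :
    Set (Matrix (∀ i, Fin (n i)) (∀ i, Fin (n i)) ℂ) :=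
  {A | ∃ (l : Fin k → ℝ) (B : Fin k → ∀ i, Matrix (Fin (n i)) (Fin (n i)) ℂ),
    (∀ j, 0 ≤ l j) ∧ (∑ j, l j) = 1 ∧ (∀ j i, IsPureDensityMatrix (B j i)) ∧
    A = ∑ j, l j • prodMat n (B j)}

noncomputable instance {m : Type*} [Fintype m] : NormedAddCommGroup (Matrix m m ℂ) :=
  Matrix.normedAddCommGroup

noncomputable instance {m : Type*} [Fintype m] : MeasurableSpace (Matrix m m ℂ) := borel _

instance {m : Type*} [Fintype m] : BorelSpace (Matrix m m ℂ) := ⟨rfl⟩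

instance {m : Type*} [Fintype m] : @BorelSpace (Matrix m m ℂ)
    (@UniformSpace.toTopologicalSpace _ (@PseudoMetricSpace.toUniformSpace _
      (@NormedAddCommGroup.toMetricSpace _ Matrix.normedAddCommGroup).toPseudoMetricSpace)) _ :=
  ⟨rfl⟩

/-- `Σ_pure^k(n,n)`: bipartite states on `ℂⁿ ⊗ ℂⁿ` (index type `Fin n × Fin n`) that are convex
combinations of `k` Kronecker products of pure density matrices. -/
def SigmaPureBipartite (n k : ℕ) : Set (Matrix (Fin n × Fin n) (Fin n × Fin n) ℂ) :=
  {A | ∃ (l : Fin k → ℝ) (B C : Fin k → Matrix (Fin n) (Fin n) ℂ),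
    (∀ j, 0 ≤ l j) ∧ (∑ j, l j) = 1 ∧ (∀ j, IsPureDensityMatrix (B j)) ∧
    (∀ j, IsPureDensityMatrix (C j)) ∧
    A = ∑ j, l j • (fun x y => B j x.1 y.1 * C j x.2 y.2 :
      Matrix (Fin n × Fin n) (Fin n × Fin n) ℂ)}


open scoped NNReal ENNReal
open Complex

noncomputable instance {m : Type*} [Fintype m] : NormedSpace ℝ (Matrix m m ℂ) :=
  Matrix.normedSpace

lemma pure_exists_vec {m : Type*} [Fintype m] [DecidableEq m] {A : Matrix m m ℂ}
    (hA : IsPureDensityMatrix A) :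
    ∃ v : m → ℂ, (∀ x y, A x y = v x * (starRingEnd ℂ) (v y)) ∧
      (∑ x, Complex.normSq (v x)) = 1 := by
  obtain ⟨⟨hps, htr⟩, hrk⟩ := hA
  have hH : A.IsHermitian := hps.1
  have hcard : Fintype.card {i // hH.eigenvalues i ≠ 0} = 1 := by
    rw [← hH.rank_eq_card_non_zero_eigs, hrk]
  obtain ⟨⟨i₀, hi₀⟩, huniq⟩ := Fintype.card_eq_one_iff.mp hcard
  have hzero : ∀ i, i ≠ i₀ → hH.eigenvalues i = 0 := by
    intro i hi
    by_contra h
    exact hi (congrArg Subtype.val (huniq ⟨i, h⟩))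
  have hnn : 0 ≤ hH.eigenvalues i₀ := hps.eigenvalues_nonneg i₀
  set U : Matrix m m ℂ := (hH.eigenvectorUnitary : Matrix m m ℂ) with hU
  have hsp := hH.spectral_theorem
  have hentry : ∀ x y, A x y =
      (hH.eigenvalues i₀ : ℂ) * (U x i₀ * (starRingEnd ℂ) (U y i₀)) := by
    intro x y
    have : A x y = ∑ i, U x i * (hH.eigenvalues i : ℂ) * (starRingEnd ℂ) (U y i) := by
      conv_lhs => rw [hsp, Unitary.conjStarAlgAut_apply]
      rw [Matrix.mul_apply]
      refine Finset.sum_congr rfl fun i _ => ?_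
      rw [Matrix.mul_diagonal]
      simp [hU, Matrix.star_apply, Matrix.IsHermitian.eigenvectorUnitary_apply,
        mul_comm, mul_assoc, mul_left_comm]
    rw [this, Finset.sum_eq_single i₀]
    · ring
    · intro i _ hi
      simp [hzero i hi]
    · intro h; exact absurd (Finset.mem_univ i₀) h
  refine ⟨fun x => (Real.sqrt (hH.eigenvalues i₀) : ℂ) * U x i₀, fun x y => ?_, ?_⟩
  · rw [hentry x y]
    rw [map_mul]
    have : (starRingEnd ℂ) ((Real.sqrt (hH.eigenvalues i₀) : ℂ)) =
        (Real.sqrt (hH.eigenvalues i₀) : ℂ) := Complex.conj_ofReal _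
    rw [this]
    have h2 : (Real.sqrt (hH.eigenvalues i₀) : ℂ) * (Real.sqrt (hH.eigenvalues i₀) : ℂ) =
        (hH.eigenvalues i₀ : ℂ) := by
      rw [← Complex.ofReal_mul, Real.mul_self_sqrt hnn]
    rw [← h2]; ring
  · have : (∑ x, Complex.normSq ((Real.sqrt (hH.eigenvalues i₀) : ℂ) * U x i₀) : ℂ) = 1 := by
      have := htr
      rw [Matrix.trace] at this
      calc (∑ x, (Complex.normSq ((Real.sqrt (hH.eigenvalues i₀) : ℂ) * U x i₀) : ℂ))
          = ∑ x, A x x := by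
            refine Finset.sum_congr rfl fun x _ => ?_
            rw [hentry x x, ← Complex.mul_conj]
            rw [map_mul, Complex.conj_ofReal]
            have h2 : (Real.sqrt (hH.eigenvalues i₀) : ℂ) * (Real.sqrt (hH.eigenvalues i₀) : ℂ) =
                (hH.eigenvalues i₀ : ℂ) := by
              rw [← Complex.ofReal_mul, Real.mul_self_sqrt hnn]
            rw [← h2]; ring
        _ = 1 := this
    exact_mod_cast this


lemma pure_chart_form {m : ℕ} {v : Fin (m+1) → ℂ}
    (hsum : (∑ x, Complex.normSq (v x)) = 1) :
    ∃ (i : Fin (m+1)) (w : Fin m → ℂ), ∀ x y,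
      v x * (starRingEnd ℂ) (v y) =
      (((1 + ∑ t, Complex.normSq (w t))⁻¹ : ℝ) : ℂ) *
        ((Fin.insertNth i 1 w : Fin (m+1) → ℂ) x *
          (starRingEnd ℂ) ((Fin.insertNth i 1 w : Fin (m+1) → ℂ) y)) := by
  have hne : ∃ i, v i ≠ 0 := by
    by_contra h
    push_neg at h
    simp [h] at hsum
  obtain ⟨i, hi⟩ := hne
  set c := v i with hc
  set w : Fin m → ℂ := fun t => v (i.succAbove t) / c with hw
  refine ⟨i, w, ?_⟩
  have hins : ∀ x, (Fin.insertNth i 1 w : Fin (m+1) → ℂ) x = v x / c := by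
    intro x
    refine Fin.succAboveCases i ?_ (fun t => ?_) x
    · rw [Fin.insertNth_apply_same]
      exact (div_self hi).symm
    · rw [Fin.insertNth_apply_succAbove]
  have hnsc : Complex.normSq c ≠ 0 := by simpa using hi
  have hq : (1 + ∑ t, Complex.normSq (w t)) = (Complex.normSq c)⁻¹ := by
    have h1 : (∑ x, Complex.normSq (v x)) =
        Complex.normSq (v i) + ∑ t, Complex.normSq (v (i.succAbove t)) :=
      Fin.sum_univ_succAbove (fun x => Complex.normSq (v x)) i
    have h2 : ∀ t, Complex.normSq (w t)
        = Complex.normSq (v (i.succAbove t)) / Complex.normSq c := fun t => map_div₀ _ _ _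
    rw [Finset.sum_congr rfl fun t _ => h2 t, ← Finset.sum_div]
    rw [hsum, ← hc] at h1
    field_simp
    linarith [h1]
  intro x y
  rw [hins x, hins y, hq, inv_inv]
  have hmc : (c : ℂ) * (starRingEnd ℂ) c = (Complex.normSq c : ℂ) := Complex.mul_conj c
  rw [map_div₀]
  rw [div_mul_div_comm, ← hmc]
  rw [mul_comm c ((starRingEnd ℂ) c)]
  have hcne : c ≠ 0 := hi
  have hcc : (starRingEnd ℂ) c ≠ 0 := by simpa using hi
  field_simp



/-- parameter space of a chart -/
abbrev ChartDom (m r : ℕ) : Type :=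
  (Fin r → ℝ) × (Fin (r+1) → Fin m → ℂ) × (Fin (r+1) → Fin m → ℂ)

noncomputable def chartMap (m r : ℕ) (a b : Fin (r+1) → Fin (m+1)) (p : ChartDom m r) :
    Matrix (Fin (m+1) × Fin (m+1)) (Fin (m+1) × Fin (m+1)) ℂ :=
  fun x y => ∑ j, (((Fin.snoc p.1 (1 - ∑ s, p.1 s) : Fin (r+1) → ℝ) j : ℝ) : ℂ) *
    ((((1 + ∑ t, Complex.normSq (p.2.1 j t))⁻¹ : ℝ) : ℂ) *
      ((Fin.insertNth (a j) 1 (p.2.1 j) : Fin (m+1) → ℂ) x.1 *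
        (starRingEnd ℂ) ((Fin.insertNth (a j) 1 (p.2.1 j) : Fin (m+1) → ℂ) y.1))) *
    ((((1 + ∑ t, Complex.normSq (p.2.2 j t))⁻¹ : ℝ) : ℂ) *
      ((Fin.insertNth (b j) 1 (p.2.2 j) : Fin (m+1) → ℂ) x.2 *
        (starRingEnd ℂ) ((Fin.insertNth (b j) 1 (p.2.2 j) : Fin (m+1) → ℂ) y.2)))

lemma contDiff_conj : ContDiff ℝ 1 (starRingEnd ℂ) := by
  have : ContDiff ℝ 1 (⇑Complex.conjCLE) := Complex.conjCLE.contDiff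
  rwa [show (⇑Complex.conjCLE) = starRingEnd ℂ from funext Complex.conjCLE_apply] at this

lemma contDiff_insertNth_entry {m : ℕ} (i x : Fin (m+1)) :
    ContDiff ℝ 1 (fun w : Fin m → ℂ => (Fin.insertNth i 1 w : Fin (m+1) → ℂ) x) := by
  refine Fin.succAboveCases i ?_ (fun t => ?_) x
  · simp only [Fin.insertNth_apply_same]; exact contDiff_const
  · simp only [Fin.insertNth_apply_succAbove]; exact contDiff_apply _ _ t

lemma contDiff_qinv {m : ℕ} : ContDiff ℝ 1
    (fun w : Fin m → ℂ => ((1 + ∑ t, Complex.normSq (w t))⁻¹ : ℝ)) := by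
  have hpos : ∀ w : Fin m → ℂ, (0:ℝ) < 1 + ∑ t, Complex.normSq (w t) := by
    intro w
    have : (0:ℝ) ≤ ∑ t, Complex.normSq (w t) :=
      Finset.sum_nonneg fun t _ => Complex.normSq_nonneg _
    linarith
  have hbase : ContDiff ℝ 1 (fun w : Fin m → ℂ => 1 + ∑ t, Complex.normSq (w t)) := by
    refine contDiff_const.add (ContDiff.sum fun t _ => ?_)
    have hev : ContDiff ℝ 1 (fun w : Fin m → ℂ => w t) := contDiff_apply _ _ t
    have hre : ContDiff ℝ 1 (fun w : Fin m → ℂ => (w t).re) :=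
      Complex.reCLM.contDiff.comp hev
    have him : ContDiff ℝ 1 (fun w : Fin m → ℂ => (w t).im) :=
      Complex.imCLM.contDiff.comp hev
    simp only [Complex.normSq_apply]
    exact (hre.mul hre).add (him.mul him)
  exact hbase.inv fun w => (hpos w).ne'

lemma contDiff_snoc_entry {r : ℕ} (j : Fin (r+1)) :
    ContDiff ℝ 1 (fun t : Fin r → ℝ => (Fin.snoc t (1 - ∑ s, t s) : Fin (r+1) → ℝ) j) := by
  induction j using Fin.lastCases with
  | last =>
    simp only [Fin.snoc_last]
    exact contDiff_const.sub (ContDiff.sum fun s _ => contDiff_apply _ _ s)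
  | cast i =>
    simp only [Fin.snoc_castSucc]
    exact contDiff_apply _ _ i

lemma contDiff_chartMap (m r : ℕ) (a b : Fin (r+1) → Fin (m+1)) :
    ContDiff ℝ 1 (chartMap m r a b) := by
  refine contDiff_pi.mpr fun x => ?_
  rw [contDiff_pi]
  intro y
  unfold chartMap
  refine ContDiff.sum fun j _ => ?_
  have h1 : ContDiff ℝ 1 (fun p : ChartDom m r =>
      (((Fin.snoc p.1 (1 - ∑ s, p.1 s) : Fin (r+1) → ℝ) j : ℝ) : ℂ)) :=
    Complex.ofRealCLM.contDiff.comp ((contDiff_snoc_entry j).comp contDiff_fst)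
  have hv : ContDiff ℝ 1 (fun p : ChartDom m r => p.2.1 j) :=
    (contDiff_apply _ _ j).comp (contDiff_fst.comp contDiff_snd)
  have hw : ContDiff ℝ 1 (fun p : ChartDom m r => p.2.2 j) :=
    (contDiff_apply _ _ j).comp (contDiff_snd.comp contDiff_snd)
  have q1 : ContDiff ℝ 1 (fun p : ChartDom m r =>
      ((((1 + ∑ t, Complex.normSq (p.2.1 j t))⁻¹ : ℝ)) : ℂ)) :=
    Complex.ofRealCLM.contDiff.comp (contDiff_qinv.comp hv)
  have q2 : ContDiff ℝ 1 (fun p : ChartDom m r =>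
      ((((1 + ∑ t, Complex.normSq (p.2.2 j t))⁻¹ : ℝ)) : ℂ)) :=
    Complex.ofRealCLM.contDiff.comp (contDiff_qinv.comp hw)
  have e1 : ContDiff ℝ 1 (fun p : ChartDom m r =>
      (Fin.insertNth (a j) 1 (p.2.1 j) : Fin (m+1) → ℂ) x.1) :=
    (contDiff_insertNth_entry (a j) x.1).comp hv
  have e2 : ContDiff ℝ 1 (fun p : ChartDom m r =>
      (starRingEnd ℂ) ((Fin.insertNth (a j) 1 (p.2.1 j) : Fin (m+1) → ℂ) y.1)) :=
    contDiff_conj.comp ((contDiff_insertNth_entry (a j) y.1).comp hv)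
  have e3 : ContDiff ℝ 1 (fun p : ChartDom m r =>
      (Fin.insertNth (b j) 1 (p.2.2 j) : Fin (m+1) → ℂ) x.2) :=
    (contDiff_insertNth_entry (b j) x.2).comp hw
  have e4 : ContDiff ℝ 1 (fun p : ChartDom m r =>
      (starRingEnd ℂ) ((Fin.insertNth (b j) 1 (p.2.2 j) : Fin (m+1) → ℂ) y.2)) :=
    contDiff_conj.comp ((contDiff_insertNth_entry (b j) y.2).comp hw)
  exact (h1.mul (q1.mul (e1.mul e2))).mul (q2.mul (e3.mul e4))


/-- in the bipartite case `ℂⁿ ⊗ ℂⁿ`, if `k·(4n - 3) < n⁴` then `Σ_pure^k(n,n)`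
has `(n⁴-1)`-dimensional Hausdorff measure zero. -/
theorem sigmaPureBipartite_measure_zero (n : ℕ) (hn : 1 ≤ n) (k : ℕ)
    (hk : k * (4 * n - 3) < n ^ 4) :
    μH[(n : ℝ) ^ 4 - 1] (SigmaPureBipartite n k) = 0 := by
  obtain ⟨m, rfl⟩ : ∃ m, n = m + 1 := ⟨n - 1, (Nat.succ_pred_eq_of_pos hn).symm⟩
  rcases k with - | r
  · have he : SigmaPureBipartite (m+1) 0 = ∅ := by
      ext A
      simp only [SigmaPureBipartite, Set.mem_setOf_eq, Set.mem_empty_iff_false, iff_false]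
      rintro ⟨l, B, C, -, hl1, -⟩
      simp at hl1
    rw [he]
    exact measure_empty
  · -- covering by charts
    have hsub : SigmaPureBipartite (m+1) (r+1) ⊆
        ⋃ (a : Fin (r+1) → Fin (m+1)) (b : Fin (r+1) → Fin (m+1)),
          Set.range (chartMap m r a b) := by
      rintro A ⟨l, B, C, hl0, hl1, hB, hC, hA⟩
      have hBex : ∀ j, ∃ (i : Fin (m+1)) (w : Fin m → ℂ), ∀ x y,
          B j x y = (((1 + ∑ t, Complex.normSq (w t))⁻¹ : ℝ) : ℂ) *
            ((Fin.insertNth i 1 w : Fin (m+1) → ℂ) x *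
              (starRingEnd ℂ) ((Fin.insertNth i 1 w : Fin (m+1) → ℂ) y)) := by
        intro j
        obtain ⟨v, hv, hvs⟩ := pure_exists_vec (hB j)
        obtain ⟨i, w, hw⟩ := pure_chart_form hvs
        exact ⟨i, w, fun x y => by rw [hv x y, hw x y]⟩
      have hCex : ∀ j, ∃ (i : Fin (m+1)) (w : Fin m → ℂ), ∀ x y,
          C j x y = (((1 + ∑ t, Complex.normSq (w t))⁻¹ : ℝ) : ℂ) *
            ((Fin.insertNth i 1 w : Fin (m+1) → ℂ) x *
              (starRingEnd ℂ) ((Fin.insertNth i 1 w : Fin (m+1) → ℂ) y)) := by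
        intro j
        obtain ⟨v, hv, hvs⟩ := pure_exists_vec (hC j)
        obtain ⟨i, w, hw⟩ := pure_chart_form hvs
        exact ⟨i, w, fun x y => by rw [hv x y, hw x y]⟩
      choose a wB hwB using hBex
      choose b wC hwC using hCex
      refine Set.mem_iUnion.mpr ⟨a, Set.mem_iUnion.mpr ⟨b,
        ⟨(fun i : Fin r => l i.castSucc, wB, wC), ?_⟩⟩⟩
      have hsnoc : (Fin.snoc (fun i : Fin r => l i.castSucc)
          (1 - ∑ s, l (Fin.castSucc s)) : Fin (r+1) → ℝ) = l := by
        funext j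
        induction j using Fin.lastCases with
        | last =>
          rw [Fin.snoc_last]
          have := Fin.sum_univ_castSucc l
          rw [hl1] at this  -- careful direction
          linarith [this]
        | cast i => rw [Fin.snoc_castSucc]
      rw [hA]
      funext x y
      unfold chartMap
      simp only [hsnoc]
      rw [Finset.sum_apply, Finset.sum_apply]
      refine Finset.sum_congr rfl fun j _ => ?_
      rw [Pi.smul_apply, Pi.smul_apply, Complex.real_smul]
      rw [hwB j x.1 y.1, hwC j x.2 y.2]
      push_cast
      ring
    -- dimension count
    have hdim : dimH (SigmaPureBipartite (m+1) (r+1)) ≤ (r + 4*m*(r+1) : ℕ) := by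
      refine (dimH_mono hsub).trans ?_
      rw [dimH_iUnion]
      refine iSup_le fun a => ?_
      rw [dimH_iUnion]
      refine iSup_le fun b => ?_
      refine (ContDiff.dimH_range_le (contDiff_chartMap m r a b)).trans ?_
      have hfr : Module.finrank ℝ (ChartDom m r) = r + 4*m*(r+1) := by
        simp [ChartDom, Module.finrank_prod, Module.finrank_pi_fintype,
          Complex.finrank_real_complex, Finset.sum_const, Module.finrank_self]
        ring
      rw [hfr]
    have hnat : r + 4*m*(r+1) < (m+1)^4 - 1 := by
      have e1 : 4*(m+1)-3 = 4*m+1 := by omega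
      rw [e1] at hk
      have e2 : (r+1)*(4*m+1) = r + 4*m*(r+1) + 1 := by ring
      rw [e2] at hk
      have h1 : 1 ≤ (m+1)^4 := Nat.one_le_pow _ _ (Nat.succ_pos m)
      omega
    have hlt : dimH (SigmaPureBipartite (m+1) (r+1)) <
        ((((m+1)^4 - 1 : ℕ) : ℝ≥0) : ℝ≥0∞) := by
      refine hdim.trans_lt ?_
      rw [show ((((m+1)^4 - 1 : ℕ) : ℝ≥0) : ℝ≥0∞) = (((m+1)^4 - 1 : ℕ) : ℝ≥0∞) by
        simp]
      exact_mod_cast hnat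
    have := hausdorffMeasure_of_dimH_lt hlt
    have hcast : ((m:ℝ) + 1) ^ 4 - 1 = ((((m+1)^4 - 1 : ℕ) : ℝ≥0) : ℝ) := by
      have h1 : 1 ≤ (m+1)^4 := Nat.one_le_pow _ _ (Nat.succ_pos m)
      rw [show (((((m+1)^4 - 1 : ℕ)) : ℝ≥0) : ℝ) = (((m+1)^4 - 1 : ℕ) : ℝ) from by norm_cast]
      push_cast [h1]
      ring
    rw [show ((m+1 : ℕ) : ℝ) = (m:ℝ) + 1 by push_cast; ring, hcast]
    exact this
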